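/- arXiv:1107.2590 — 2 statements merged into one kernel-verified Lean document; each statement's English description precedes it below -/
import Mathlib

section
/- Let P ≤ Γ₁ × ⋯ × Γₙ be a subgroup, and let I, J ⊆ {1,…,n} with I ∪ J = {1,…,n} and I ∩ J ≠ ∅. Then p_{I∩J}(P ∩ Γ_I) = p_J(P) ∩ Γ_{I∩J}, where p_K denotes projection onto the factors indexed by K and Γ_K denotes the sub-product of factors indexed by K, viewed inside the full product. -/
/-- The projection of the direct product `∀ i, Γ i` onto the factors indexed by `K`,
viewed as an endomorphism (coordinates outside `K` are set to `1`). -/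
def projHom {n : ℕ} (Γ : Fin n → Type*) [∀ i, Group (Γ i)] (K : Finset (Fin n)) :
    (∀ i, Γ i) →* (∀ i, Γ i) where
  toFun g i := if i ∈ K then g i else 1
  map_one' := by funext i; by_cases hi : i ∈ K <;> simp [hi]
  map_mul' g h := by funext i; by_cases hi : i ∈ K <;> simp [hi]

/-- The sub-product `Γ_K`: elements supported on `K`. -/
def suppSubgroup {n : ℕ} (Γ : Fin n → Type*) [∀ i, Group (Γ i)] (K : Finset (Fin n)) :
    Subgroup (∀ i, Γ i) :=
  Subgroup.pi ((↑K : Set (Fin n))ᶜ) fun _ => ⊥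

theorem stmt_7 {n : ℕ} (Γ : Fin n → Type*) [∀ i, Group (Γ i)]
    (P : Subgroup (∀ i, Γ i))
    (I J : Finset (Fin n)) (hIJ : I ∪ J = Finset.univ) (hIJne : I ∩ J ≠ ∅) :
    (P ⊓ suppSubgroup Γ I).map (projHom Γ (I ∩ J)) =
      P.map (projHom Γ J) ⊓ suppSubgroup Γ (I ∩ J) := by
  have memsupp : ∀ (K : Finset (Fin n)) (g : ∀ i, Γ i),
      g ∈ suppSubgroup Γ K ↔ ∀ i, i ∉ K → g i = 1 := by
    intro K g
    simp [suppSubgroup, Subgroup.mem_pi]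
  ext x
  simp only [Subgroup.mem_map, Subgroup.mem_inf]
  constructor
  · rintro ⟨g, ⟨hgP, hgI⟩, rfl⟩
    rw [memsupp] at hgI
    refine ⟨⟨g, hgP, ?_⟩, ?_⟩
    · funext i
      simp only [projHom, MonoidHom.coe_mk, OneHom.coe_mk, Finset.mem_inter]
      by_cases hI : i ∈ I <;> by_cases hJ : i ∈ J <;>
        simp [hI, hJ, hgI i]
    · rw [memsupp]
      intro i hi
      simp only [projHom, MonoidHom.coe_mk, OneHom.coe_mk, if_neg hi]
  · rintro ⟨⟨g, hgP, rfl⟩, hsupp⟩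
    rw [memsupp] at hsupp
    have hgI : ∀ i, i ∉ I → g i = 1 := by
      intro i hiI
      have hiJ : i ∈ J := by
        have := Finset.mem_univ i
        rw [← hIJ, Finset.mem_union] at this
        tauto
      have := hsupp i (by simp [Finset.mem_inter, hiI])
      simpa [projHom, hiJ] using this
    refine ⟨g, ⟨hgP, (memsupp I g).2 hgI⟩, ?_⟩
    funext i
    simp only [projHom, MonoidHom.coe_mk, OneHom.coe_mk, Finset.mem_inter]
    by_cases hI : i ∈ I <;> by_cases hJ : i ∈ J <;>
      simp [hI, hJ, hgI i]
end

section
/- Let P ≤ Γ₁ × ⋯ × Γₙ be a subgroup which virtually surjects to k-tuples for some k ≥ 2. Then N = P ∩ (Γ₁ × ⋯ × Γ_{n−1}) (the intersection of P with the sub-product of the first n−1 factors) virtually surjects to (k−1)-tuples as a subgroup of Γ₁ × ⋯ × Γ_{n−1}. -/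
/-!
Let `e` be the last coordinate and `M` the first `n - 1` ones. For `J ⊆ M` with `|J| = k - 1`,
put `J' = J ∪ {e}`, so `|J'| = k` and `p_{J'}(P)` has finite index in `Γ_{J'}`, hence
`p_{J'}(P) ∩ Γ_J` has finite index in `Γ_J`. An element of `p_{J'}(P)` lying in `Γ_J` is the
projection of some `g ∈ P` with `g_e = 1`, i.e. of some `g ∈ P ∩ Γ_M`; so
`p_{J'}(P) ∩ Γ_J ≤ p_J(P ∩ Γ_M)`, and the latter has finite index in `Γ_J` as well.
-/

namespace VirtualSurjection

variable {n : ℕ} {Γ : Fin n → Type*} [∀ i, Group (Γ i)]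

@[simp]
lemma projHom_apply (K : Finset (Fin n)) (g : ∀ i, Γ i) (i : Fin n) :
    projHom Γ K g i = if i ∈ K then g i else 1 :=
  rfl

lemma mem_suppSubgroup {K : Finset (Fin n)} {x : ∀ i, Γ i} :
    x ∈ suppSubgroup Γ K ↔ ∀ i, i ∉ K → x i = 1 := by
  simp [suppSubgroup, Subgroup.mem_pi]

lemma suppSubgroup_mono {J K : Finset (Fin n)} (h : J ⊆ K) :
    suppSubgroup Γ J ≤ suppSubgroup Γ K := fun _ hx =>
  mem_suppSubgroup.mpr fun i hi => mem_suppSubgroup.mp hx i fun hiJ => hi (h hiJ)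

lemma map_projHom_inf_suppSubgroup_le (P : Subgroup (∀ i, Γ i)) {J J' M : Finset (Fin n)}
    (hJJ' : J ⊆ J') (hJM : J ⊆ M) (hMJ' : ∀ i, i ∉ M → i ∈ J') :
    P.map (projHom Γ J') ⊓ suppSubgroup Γ J ≤ (P ⊓ suppSubgroup Γ M).map (projHom Γ J) := by
  rintro x ⟨⟨g, hgP, rfl⟩, hxJ⟩
  have hx : ∀ i, i ∉ J → (if i ∈ J' then g i else 1) = 1 := mem_suppSubgroup.mp hxJ
  refine ⟨g, ⟨hgP, mem_suppSubgroup.mpr fun i hiM => ?_⟩, funext fun i => ?_⟩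
  · simpa [hMJ' i hiM] using hx i fun hiJ => hiM (hJM hiJ)
  · by_cases hiJ : i ∈ J
    · simp [hiJ, hJJ' hiJ]
    · simpa [hiJ] using (hx i hiJ).symm

lemma relIndex_map_projHom_inf_ne_zero (P : Subgroup (∀ i, Γ i)) {J J' M : Finset (Fin n)}
    (hJJ' : J ⊆ J') (hJM : J ⊆ M) (hMJ' : ∀ i, i ∉ M → i ∈ J')
    (hP : (P.map (projHom Γ J')).relIndex (suppSubgroup Γ J') ≠ 0) :
    ((P ⊓ suppSubgroup Γ M).map (projHom Γ J)).relIndex (suppSubgroup Γ J) ≠ 0 := by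
  have hJ : (P.map (projHom Γ J')).relIndex (suppSubgroup Γ J) ≠ 0 :=
    mt (Subgroup.relIndex_eq_zero_of_le_right (suppSubgroup_mono hJJ')) hP
  rw [← Subgroup.inf_relIndex_right] at hJ
  exact mt (Subgroup.relIndex_eq_zero_of_le_left
    (map_projHom_inf_suppSubgroup_le P hJJ' hJM hMJ')) hJ

end VirtualSurjection

open VirtualSurjection in
theorem stmt_8 {n k : ℕ} (hk : 2 ≤ k)
    (Γ : Fin n → Type*) [∀ i, Group (Γ i)]
    (P : Subgroup (∀ i, Γ i))
    (hvs : ∀ J : Finset (Fin n), J.card = k →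
      ((P.map (projHom Γ J)).relIndex (suppSubgroup Γ J)) ≠ 0) :
    ∀ J : Finset (Fin n),
      J ⊆ Finset.univ.filter (fun i : Fin n => (i : ℕ) < n - 1) →
      J.card = k - 1 →
      (((P ⊓ suppSubgroup Γ (Finset.univ.filter (fun i : Fin n => (i : ℕ) < n - 1))).map
          (projHom Γ J)).relIndex (suppSubgroup Γ J)) ≠ 0 := by
  intro J hJM hJcard
  obtain ⟨i₀, -⟩ : J.Nonempty := Finset.card_pos.mp (by omega)
  let e : Fin n := ⟨n - 1, Nat.sub_one_lt_of_lt i₀.pos⟩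
  have heJ : e ∉ J := fun he => by simpa [e] using hJM he
  refine relIndex_map_projHom_inf_ne_zero P (J' := insert e J) (Finset.subset_insert e J) hJM
    (fun i hi => ?_) (hvs _ ?_)
  · have hie : i = e := Fin.ext (by simp at hi; simp only [e]; omega)
    exact hie ▸ Finset.mem_insert_self e J
  · rw [Finset.card_insert_of_notMem heJ, hJcard]
    omega
end
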